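/- Suppose m < n < q, λ > 0 and γ < 0, and set ν = (n−m)/(q(s−1)) and U_c = (λ/|γ|)^{1/(s−1)}. Then the zero solution is polynomially stable: there exist δ > 0, t1 ≥ t0 and K > 0 such that every admissible solution with v(t1) ≤ δ satisfies v(t) ≤ K·t^{−ν} for all t ≥ t1; moreover, there exists δ' > 0 such that every admissible solution with |t1^{ν}·v(t1) − U_c| ≤ δ' satisfies t^{ν}·v(t) → U_c as t → ∞. -/

import Mathlib

/-!
With `w = t^ν v`, the choice of `ν` makes both leading terms of the equation scale like
`t^{-n/q}`: as long as `w` stays bounded, `w' = t^{-n/q} (γ w^s + λ w + o(1))`, the `o(1)`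
collecting the remainder and the term `ν w / t`. The drift `γ w^s + λ w` is negative above
`U_c` and positive on `(0, U_c)`, and `∫ t^{-n/q} dt = ∞`. Hence a barrier argument keeps `w`
below any level above `U_c` once it starts there, and, started in `[U_c/2, 3U_c/2]`, `w` is
eventually trapped in every neighbourhood of `U_c`.
-/

/-- An admissible solution of the reduced equation
`v'(t) = γ·t^{−m/q}·v(t)^s + λ·t^{−n/q}·v(t) + ρ(t)` on `[t0,∞)` with values in
`[0,d0]`, where `|ρ(t)| ≤ M·(t^{−m/q}·v(t)^s + t^{−n/q}·v(t))·(v(t) + t^{−1/q})`. -/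
def IsAdmissible (q m n s : ℕ) (γ lam d0 t0 M : ℝ) (v : ℝ → ℝ) : Prop :=
  (∀ t ≥ t0, v t ∈ Set.Icc (0:ℝ) d0) ∧
  ∃ ρ : ℝ → ℝ,
    (∀ t ≥ t0, |ρ t| ≤
      M * (t ^ (-(m:ℝ)/(q:ℝ)) * v t ^ s + t ^ (-(n:ℝ)/(q:ℝ)) * v t)
        * (v t + t ^ (-(1:ℝ)/(q:ℝ)))) ∧
    (∀ t ≥ t0, HasDerivAt v
      (γ * t ^ (-(m:ℝ)/(q:ℝ)) * v t ^ s + lam * t ^ (-(n:ℝ)/(q:ℝ)) * v t + ρ t) t)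

open Set Filter Topology

section Comparison

variable {w D : ℝ → ℝ} {T L : ℝ}

theorem le_of_deriv_neg_at_level (hw : ∀ t ≥ T, HasDerivAt w (D t) t) (hT : w T ≤ L)
    (hL : ∀ t ≥ T, w t = L → D t < 0) : ∀ t ≥ T, w t ≤ L := fun t ht =>
  image_le_of_deriv_right_lt_deriv_boundary (b := t) (B := fun _ => L) (B' := 0)
    (fun x hx => (hw x hx.1).continuousAt.continuousWithinAt)
    (fun x hx => (hw x hx.1).hasDerivWithinAt) hT (fun _ => hasDerivAt_const _ _)
    (fun x hx => hL x hx.1) ⟨ht, le_rfl⟩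

theorem ge_of_deriv_pos_at_level (hw : ∀ t ≥ T, HasDerivAt w (D t) t) (hT : L ≤ w T)
    (hL : ∀ t ≥ T, w t = L → 0 < D t) : ∀ t ≥ T, L ≤ w t := fun t ht =>
  neg_le_neg_iff.1 <| le_of_deriv_neg_at_level (w := -w) (D := -D)
    (fun t ht => (hw t ht).neg) (neg_le_neg hT)
    (fun t ht h => neg_neg_of_pos (hL t ht (neg_inj.1 h))) t ht

variable {β c : ℝ}

theorem tendsto_atBot_of_deriv_le_neg_rpow (hβ : β < 1) (hc : 0 < c) (hT : 0 < T)
    (hw : ∀ t ≥ T, HasDerivAt w (D t) t) (hD : ∀ t ≥ T, D t ≤ -(c * t ^ (-β))) :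
    Tendsto w atTop atBot := by
  set φ : ℝ → ℝ := fun t => c / (1 - β) * t ^ (1 - β)
  have hφ : ∀ t > 0, HasDerivAt φ (c * t ^ (-β)) t := fun t ht => by
    refine ((Real.hasDerivAt_rpow_const (p := 1 - β) (Or.inl ht.ne')).const_mul
      (c / (1 - β))).congr_deriv ?_
    rw [sub_sub_cancel_left]
    field_simp [(sub_pos.2 hβ).ne']
  have hφ_top : Tendsto φ atTop atTop :=
    (tendsto_rpow_atTop (sub_pos.2 hβ)).const_mul_atTop (div_pos hc (sub_pos.2 hβ))
  have hle : ∀ t ≥ T, w t ≤ w T + φ T - φ t := fun t ht =>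
    image_le_of_deriv_right_le_deriv_boundary (B := fun t => w T + φ T - φ t)
      (B' := fun t => -(c * t ^ (-β)))
      (fun x hx => (hw x hx.1).continuousAt.continuousWithinAt)
      (fun x hx => (hw x hx.1).hasDerivWithinAt) (by simp)
      (fun x hx => ((hφ x (hT.trans_le hx.1)).const_sub _).continuousAt.continuousWithinAt)
      (fun x hx => ((hφ x (hT.trans_le hx.1)).const_sub _).hasDerivWithinAt)
      (fun x hx => hD x hx.1) ⟨ht, le_rfl⟩
  refine tendsto_atBot_mono' atTop (eventually_atTop.2 ⟨T, hle⟩) ?_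
  exact tendsto_atBot_add_const_left _ _ (tendsto_neg_atTop_atBot.comp hφ_top)

theorem eventually_le_of_deriv_le_neg_rpow (hβ : β < 1) (hc : 0 < c) (hT : 0 < T)
    (hw : ∀ t ≥ T, HasDerivAt w (D t) t) (hD : ∀ t ≥ T, L ≤ w t → D t ≤ -(c * t ^ (-β))) :
    ∀ᶠ t in atTop, w t ≤ L := by
  obtain ⟨t₁, ht₁, hwt₁⟩ : ∃ t₁ ≥ T, w t₁ ≤ L := by
    by_contra! h
    obtain ⟨t, hwt, ht⟩ := (((tendsto_atBot_of_deriv_le_neg_rpow hβ hc hT hw fun t ht =>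
      hD t ht (h t ht).le).eventually_lt_atBot L).and (eventually_ge_atTop T)).exists
    exact (h t ht).not_gt hwt
  filter_upwards [eventually_ge_atTop t₁] with t ht
  refine le_of_deriv_neg_at_level (fun u hu => hw u (ht₁.trans hu)) hwt₁ (fun u hu hwu => ?_) t ht
  have hu₀ : 0 < u := hT.trans_le (ht₁.trans hu)
  linarith [hD u (ht₁.trans hu) hwu.ge, mul_pos hc (Real.rpow_pos_of_pos hu₀ (-β))]

theorem eventually_ge_of_deriv_ge_rpow (hβ : β < 1) (hc : 0 < c) (hT : 0 < T)
    (hw : ∀ t ≥ T, HasDerivAt w (D t) t) (hD : ∀ t ≥ T, w t ≤ L → c * t ^ (-β) ≤ D t) :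
    ∀ᶠ t in atTop, L ≤ w t := by
  filter_upwards [eventually_le_of_deriv_le_neg_rpow (w := -w) (D := -D) (L := -L) hβ hc hT
    (fun t ht => (hw t ht).neg) fun t ht h => neg_le_neg (hD t ht (neg_le_neg_iff.1 h))]
    with t ht
  exact neg_le_neg_iff.1 ht

end Comparison

def IsNearSolution (w D g E : ℝ → ℝ) (β K T : ℝ) : Prop :=
  ∀ t ≥ T, HasDerivAt w (D t) t ∧ (w t ≤ K → |D t - t ^ (-β) * g (w t)| ≤ t ^ (-β) * E t)

namespace IsNearSolution

variable {w D g E : ℝ → ℝ} {β K T : ℝ}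

theorem hasDerivAt (h : IsNearSolution w D g E β K T) : ∀ t ≥ T, HasDerivAt w (D t) t :=
  fun t ht => (h t ht).1

theorem deriv_le (h : IsNearSolution w D g E β K T) {t : ℝ} (ht : T ≤ t) (hwt : w t ≤ K) :
    D t ≤ t ^ (-β) * (g (w t) + E t) := by
  linarith [(abs_le.1 ((h t ht).2 hwt)).2]

theorem le_deriv (h : IsNearSolution w D g E β K T) {t : ℝ} (ht : T ≤ t) (hwt : w t ≤ K) :
    t ^ (-β) * (g (w t) - E t) ≤ D t := by
  linarith [(abs_le.1 ((h t ht).2 hwt)).1]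

theorem le_of_le (h : IsNearSolution w D g E β K T) (hT : 0 < T) (hE : ∀ t ≥ T, E t < -g K)
    (hwT : w T ≤ K) : ∀ t ≥ T, w t ≤ K :=
  le_of_deriv_neg_at_level h.hasDerivAt hwT fun t ht hwt => by
    have := h.deriv_le ht hwt.le
    rw [hwt] at this
    nlinarith [hE t ht, Real.rpow_pos_of_pos (hT.trans_le ht) (-β)]

theorem ge_of_ge (h : IsNearSolution w D g E β K T) (hT : 0 < T) (hwK : ∀ t ≥ T, w t ≤ K)
    {b : ℝ} (hE : ∀ t ≥ T, E t < g b) (hwT : b ≤ w T) : ∀ t ≥ T, b ≤ w t :=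
  ge_of_deriv_pos_at_level h.hasDerivAt hwT fun t ht hwt => by
    have := h.le_deriv ht (hwK t ht)
    rw [hwt] at this
    nlinarith [hE t ht, Real.rpow_pos_of_pos (hT.trans_le ht) (-β)]

theorem eventually_le (h : IsNearSolution w D g E β K T) (hβ : β < 1) (hT : 0 < T)
    (hwK : ∀ t ≥ T, w t ≤ K) (hE : Tendsto E atTop (𝓝 0)) (hg : Continuous g) {L : ℝ}
    (hneg : ∀ x ∈ Icc L K, g x < 0) : ∀ᶠ t in atTop, w t ≤ L := by
  obtain ⟨c, hc, hgc⟩ := isCompact_Icc.exists_forall_le' (f := fun x => -g x)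
    hg.neg.continuousOn fun x hx => neg_pos.2 (hneg x hx)
  obtain ⟨T', hT'⟩ := eventually_atTop.1 (hE.eventually (gt_mem_nhds (half_pos hc)))
  refine eventually_le_of_deriv_le_neg_rpow hβ (half_pos hc) (hT.trans_le (le_max_left T T'))
    (fun t ht => h.hasDerivAt t (le_of_max_le_left ht)) fun t ht hLw => ?_
  have hD := h.deriv_le (le_of_max_le_left ht) (hwK t (le_of_max_le_left ht))
  have := hgc (w t) ⟨hLw, hwK t (le_of_max_le_left ht)⟩
  nlinarith [hT' t (le_of_max_le_right ht),
    Real.rpow_pos_of_pos (hT.trans_le (le_of_max_le_left ht)) (-β)]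

theorem eventually_ge (h : IsNearSolution w D g E β K T) (hβ : β < 1) (hT : 0 < T)
    (hwK : ∀ t ≥ T, w t ≤ K) (hE : Tendsto E atTop (𝓝 0)) (hg : Continuous g) {b L : ℝ}
    (hwb : ∀ t ≥ T, b ≤ w t) (hpos : ∀ x ∈ Icc b L, 0 < g x) : ∀ᶠ t in atTop, L ≤ w t := by
  obtain ⟨c, hc, hgc⟩ := isCompact_Icc.exists_forall_le' hg.continuousOn hpos
  obtain ⟨T', hT'⟩ := eventually_atTop.1 (hE.eventually (gt_mem_nhds (half_pos hc)))
  refine eventually_ge_of_deriv_ge_rpow hβ (half_pos hc) (hT.trans_le (le_max_left T T'))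
    (fun t ht => h.hasDerivAt t (le_of_max_le_left ht)) fun t ht hwL => ?_
  have hD := h.le_deriv (le_of_max_le_left ht) (hwK t (le_of_max_le_left ht))
  have := hgc (w t) ⟨hwb t (le_of_max_le_left ht), hwL⟩
  nlinarith [hT' t (le_of_max_le_right ht),
    Real.rpow_pos_of_pos (hT.trans_le (le_of_max_le_left ht)) (-β)]

theorem tendsto (h : IsNearSolution w D g E β K T) (hβ : β < 1) (hT : 0 < T)
    (hE : Tendsto E atTop (𝓝 0)) (hg : Continuous g) {b U : ℝ}
    (hneg : ∀ x ∈ Ioc U K, g x < 0) (hpos : ∀ x ∈ Ico b U, 0 < g x)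
    (hwb : ∀ t ≥ T, b ≤ w t) (hwK : ∀ t ≥ T, w t ≤ K) : Tendsto w atTop (𝓝 U) := by
  refine tendsto_order.2 ⟨fun a ha => ?_, fun a ha => ?_⟩
  · filter_upwards [h.eventually_ge hβ hT hwK hE hg hwb (L := (a + U) / 2)
      fun x hx => hpos x ⟨hx.1, by linarith [hx.2]⟩] with t ht
    linarith
  · filter_upwards [h.eventually_le hβ hT hwK hE hg (L := (U + a) / 2)
      fun x hx => hneg x ⟨by linarith [hx.1], hx.2⟩] with t ht
    linarith

end IsNearSolution

def drift (γ lam : ℝ) (s : ℕ) (x : ℝ) : ℝ := γ * x ^ s + lam * x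

section Drift

variable {γ lam U x : ℝ} {s : ℕ}

theorem continuous_drift : Continuous (drift γ lam s) := by
  unfold drift; fun_prop

theorem drift_eq_mul (hs : 1 ≤ s) : drift γ lam s x = x * (lam + γ * x ^ (s - 1)) := by
  conv_lhs => rw [drift, ← Nat.sub_add_cancel hs, pow_succ']
  ring

theorem drift_neg_of_lt (hγ : γ < 0) (hs : 2 ≤ s) (hU : 0 ≤ U) (hUeq : lam + γ * U ^ (s - 1) = 0)
    (hx : U < x) : drift γ lam s x < 0 := by
  have := pow_lt_pow_left₀ hx hU (by omega : s - 1 ≠ 0)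
  rw [drift_eq_mul (by omega)]
  exact mul_neg_of_pos_of_neg (hU.trans_lt hx) (by nlinarith)

theorem drift_pos_of_lt (hγ : γ < 0) (hs : 2 ≤ s) (hUeq : lam + γ * U ^ (s - 1) = 0)
    (hx₀ : 0 < x) (hx : x < U) : 0 < drift γ lam s x := by
  have := pow_lt_pow_left₀ hx hx₀.le (by omega : s - 1 ≠ 0)
  rw [drift_eq_mul (by omega)]
  exact mul_pos hx₀ (by nlinarith)

theorem add_mul_rpow_pow_eq_zero (hγ : γ < 0) (hlam : 0 ≤ lam) (hs : 2 ≤ s) :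
    lam + γ * ((lam / |γ|) ^ (1 / ((s : ℝ) - 1))) ^ (s - 1) = 0 := by
  have hs₁ : ((s - 1 : ℕ) : ℝ) = (s : ℝ) - 1 := by rw [Nat.cast_sub (by omega), Nat.cast_one]
  have hs₀ : (s : ℝ) - 1 ≠ 0 := by rw [← hs₁]; exact_mod_cast (by omega : s - 1 ≠ 0)
  rw [← Real.rpow_natCast, ← Real.rpow_mul (by positivity), hs₁, one_div_mul_cancel hs₀,
    Real.rpow_one, abs_of_neg hγ]
  field_simp [hγ.ne]
  ring

end Drift

section Rescaling

variable {t x ν a b : ℝ} {s : ℕ}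

theorem rpow_mul_rpow_neg_mul_pow (ht : 0 < t) (hrel : ν * ((s : ℝ) - 1) = b - a) :
    t ^ ν * (t ^ (-a) * x ^ s) = t ^ (-b) * (t ^ ν * x) ^ s := by
  rw [mul_pow, ← Real.rpow_natCast (t ^ ν), ← Real.rpow_mul ht.le, ← mul_assoc, ← mul_assoc,
    ← Real.rpow_add ht, ← Real.rpow_add ht]
  congr 2
  linarith

theorem le_mul_rpow_neg_iff (ht : 0 < t) {K : ℝ} : x ≤ K * t ^ (-ν) ↔ t ^ ν * x ≤ K := by
  rw [Real.rpow_neg ht.le, ← div_eq_mul_inv, le_div_iff₀ (Real.rpow_pos_of_pos ht ν), mul_comm]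

end Rescaling

/-- The two summands bound the contributions of `ν t^{ν-1} v` and of the remainder `ρ` to the
derivative of `t^ν v`, after factoring out `t^{-b}`. -/
noncomputable def driftError (s : ℕ) (ν K M b c t : ℝ) : ℝ :=
  ν * K * t ^ (-(1 - b)) + M * (K ^ s + K) * (K * t ^ (-ν) + t ^ (-c))

theorem tendsto_driftError {s : ℕ} {ν K M b c : ℝ} (hb : b < 1) (hν : 0 < ν) (hc : 0 < c) :
    Tendsto (driftError s ν K M b c) atTop (𝓝 0) := by
  unfold driftError
  have h := (((tendsto_rpow_neg_atTop (sub_pos.2 hb)).const_mul (ν * K)).add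
    ((((tendsto_rpow_neg_atTop hν).const_mul K).add (tendsto_rpow_neg_atTop hc)).const_mul
      (M * (K ^ s + K))))
  simpa only [mul_zero, add_zero] using h

theorem exists_ge_forall_lt_of_tendsto {E : ℝ → ℝ} (hE : Tendsto E atTop (𝓝 0)) (t0 : ℝ)
    {η : ℝ} (hη : 0 < η) : ∃ t₁ ≥ t0, 0 < t₁ ∧ ∀ t ≥ t₁, E t < η := by
  obtain ⟨T, hT⟩ := eventually_atTop.1 (hE.eventually (gt_mem_nhds hη))
  refine ⟨max (max t0 1) T, (le_max_left _ _).trans (le_max_left _ _),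
    one_pos.trans_le ((le_max_right _ _).trans (le_max_left _ _)), fun t ht => hT t ?_⟩
  exact (le_max_right _ _).trans ht

theorem abs_rescaled_deriv_sub_le {t x r ν a b c K M γ lam : ℝ} {s : ℕ} (ht : 0 < t)
    (hx : 0 ≤ x) (hν : 0 ≤ ν) (hM : 0 ≤ M) (hrel : ν * ((s : ℝ) - 1) = b - a)
    (hxK : t ^ ν * x ≤ K) (hr : |r| ≤ M * (t ^ (-a) * x ^ s + t ^ (-b) * x) * (x + t ^ (-c))) :
    |ν * t ^ (ν - 1) * x + t ^ ν * (γ * t ^ (-a) * x ^ s + lam * t ^ (-b) * x + r)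
      - t ^ (-b) * drift γ lam s (t ^ ν * x)| ≤ t ^ (-b) * driftError s ν K M b c t := by
  have hpow := rpow_mul_rpow_neg_mul_pow (x := x) ht hrel
  have hinv : t ^ (-b) * t ^ (-(1 - b)) = t⁻¹ := by
    rw [← Real.rpow_add ht, ← Real.rpow_neg_one]; ring_nf
  have hlinear : ν * t ^ (ν - 1) * x = t ^ (-b) * (ν * (t ^ ν * x) * t ^ (-(1 - b))) := by
    rw [Real.rpow_sub_one ht.ne', div_eq_mul_inv, ← hinv]; ring
  have hrem : t ^ ν * |r| ≤ t ^ (-b) * (M * ((t ^ ν * x) ^ s + t ^ ν * x) * (x + t ^ (-c))) :=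
    (mul_le_mul_of_nonneg_left hr (by positivity)).trans_eq
      (by linear_combination M * (x + t ^ (-c)) * hpow)
  have hxK' : x ≤ K * t ^ (-ν) := (le_mul_rpow_neg_iff ht).2 hxK
  have hK : 0 ≤ K := (by positivity : 0 ≤ t ^ ν * x).trans hxK
  calc _ = |ν * t ^ (ν - 1) * x + t ^ ν * r| := by
        congr 1; rw [drift]; linear_combination γ * hpow
    _ ≤ ν * t ^ (ν - 1) * x + t ^ ν * |r| := by
        refine (abs_add_le _ _).trans_eq ?_
        rw [abs_of_nonneg (by positivity : 0 ≤ ν * t ^ (ν - 1) * x), abs_mul,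
          abs_of_nonneg (Real.rpow_nonneg ht.le ν)]
    _ ≤ t ^ (-b) * (ν * K * t ^ (-(1 - b)))
          + t ^ (-b) * (M * (K ^ s + K) * (K * t ^ (-ν) + t ^ (-c))) := by
        rw [hlinear]
        exact add_le_add (by gcongr) (hrem.trans (by gcongr))
    _ = t ^ (-b) * driftError s ν K M b c t := by rw [driftError]; ring

theorem IsAdmissible.isNearSolution {q m n s : ℕ} {γ lam d0 t0 M ν K T : ℝ} {v : ℝ → ℝ}
    (hv : IsAdmissible q m n s γ lam d0 t0 M v) (hν : 0 ≤ ν) (hM : 0 ≤ M)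
    (hrel : ν * ((s : ℝ) - 1) = ((n : ℝ) - m) / q) (hT₀ : t0 ≤ T) (hT : 0 < T) :
    ∃ D, IsNearSolution (fun t => t ^ ν * v t) D (drift γ lam s)
      (driftError s ν K M (n / q) (1 / q)) ((n : ℝ) / q) K T := by
  obtain ⟨hrange, ρ, hρ, hderiv⟩ := hv
  refine ⟨_, fun t ht => ⟨(Real.hasDerivAt_rpow_const (Or.inl (hT.trans_le ht).ne')).mul
    (hderiv t (hT₀.trans ht)), fun hwK => ?_⟩⟩
  have hρt := hρ t (hT₀.trans ht)
  simp only [neg_div] at hρt ⊢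
  exact abs_rescaled_deriv_sub_le (hT.trans_le ht) (hrange t (hT₀.trans ht)).1 hν hM
    (by rw [hrel, sub_div]) hwK hρt

theorem polynomial_stability_m_lt_n_lt_q_general
    (q m n s : ℕ) (hmn : m < n) (hnq : n < q) (hs : 2 ≤ s)
    (γ lam d0 t0 M : ℝ) (hγ : γ < 0) (hlam : 0 < lam)
    (hM : 0 < M) :
    ∀ ν Uc : ℝ, ν = ((n:ℝ) - (m:ℝ)) / ((q:ℝ) * ((s:ℝ) - 1)) →
      Uc = (lam / |γ|) ^ (1 / ((s:ℝ) - 1)) →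
    ∃ δ > 0, ∃ t1 ≥ t0, ∃ K > 0,
      (∀ v : ℝ → ℝ, IsAdmissible q m n s γ lam d0 t0 M v → v t1 ≤ δ →
        ∀ t ≥ t1, v t ≤ K * t ^ (-ν)) ∧
      (∃ δ' > 0, ∀ v : ℝ → ℝ, IsAdmissible q m n s γ lam d0 t0 M v →
        |t1 ^ ν * v t1 - Uc| ≤ δ' →
        Filter.Tendsto (fun t => t ^ ν * v t) Filter.atTop (nhds Uc)) := by
  intro ν Uc hν hUc
  have hq : (0 : ℝ) < q := Nat.cast_pos.2 (by omega)
  have hβ : (n : ℝ) / q < 1 := (div_lt_one hq).2 (by exact_mod_cast hnq)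
  have hs₁ : (1 : ℝ) < s := by exact_mod_cast hs
  have hν₀ : 0 < ν :=
    hν ▸ div_pos (sub_pos.2 (by exact_mod_cast hmn)) (mul_pos hq (sub_pos.2 hs₁))
  have hrel : ν * ((s : ℝ) - 1) = ((n : ℝ) - m) / q := by
    rw [hν]; field_simp [(sub_pos.2 hs₁).ne']
  have hUeq : lam + γ * Uc ^ (s - 1) = 0 := hUc ▸ add_mul_rpow_pow_eq_zero hγ hlam.le hs
  have hUc₀ : 0 < Uc := hUc ▸ Real.rpow_pos_of_pos (div_pos hlam (abs_pos.2 hγ.ne)) _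
  -- any `K > 3 Uc / 2` works: the band `|w - Uc| ≤ Uc / 2` must lie below `K`
  set K := 2 * Uc
  set E := driftError s ν K M (n / q) (1 / q)
  have hE : Tendsto E atTop (𝓝 0) := tendsto_driftError hβ hν₀ (one_div_pos.2 hq)
  obtain ⟨t₁, ht₀, ht₁, hE₁⟩ := exists_ge_forall_lt_of_tendsto hE t0 <| lt_min
    (neg_pos.2 (drift_neg_of_lt hγ hs hUc₀.le hUeq (by linarith : Uc < K)))
    (drift_pos_of_lt hγ hs hUeq (half_pos hUc₀) (half_lt_self hUc₀))
  have hEK : ∀ t ≥ t₁, E t < -drift γ lam s K := fun t ht => (hE₁ t ht).trans_le (min_le_left _ _)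
  have hEU : ∀ t ≥ t₁, E t < drift γ lam s (Uc / 2) := fun t ht =>
    (hE₁ t ht).trans_le (min_le_right _ _)
  refine ⟨K * t₁ ^ (-ν), by positivity, t₁, ht₀, K, by positivity, fun v hv hv₁ t ht => ?_,
    Uc / 2, half_pos hUc₀, fun v hv hv₁ => ?_⟩
  · obtain ⟨D, hD⟩ := hv.isNearSolution (K := K) hν₀.le hM.le hrel ht₀ ht₁
    exact (le_mul_rpow_neg_iff (ht₁.trans_le ht)).2
      (hD.le_of_le ht₁ hEK ((le_mul_rpow_neg_iff ht₁).1 hv₁) t ht)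
  · obtain ⟨D, hD⟩ := hv.isNearSolution (K := K) hν₀.le hM.le hrel ht₀ ht₁
    obtain ⟨hlo, hhi⟩ := abs_le.1 hv₁
    have hwK := hD.le_of_le ht₁ hEK (by linarith)
    exact hD.tendsto hβ ht₁ hE continuous_drift
      (fun x hx => drift_neg_of_lt hγ hs hUc₀.le hUeq hx.1)
      (fun x hx => drift_pos_of_lt hγ hs hUeq (by linarith [hx.1]) hx.2)
      (hD.ge_of_ge ht₁ hwK hEU (by linarith)) hwK

/-- if `m < n < q`, `λ > 0` and `γ < 0`, then with
`ν = (n−m)/(q(s−1))` and `U_c = (λ/|γ|)^{1/(s−1)}` the zero solution is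
polynomially stable: `v(t) ≤ K·t^{−ν}`, and solutions with `t1^ν·v(t1)` close
to `U_c` satisfy `t^ν·v(t) → U_c`. -/
theorem polynomial_stability_m_lt_n_lt_q
    (q m n s : ℕ) (hq : 0 < q) (hm : 0 < m) (hmn : m < n) (hnq : n < q) (hs : 2 ≤ s)
    (γ lam d0 t0 M : ℝ) (hγ : γ < 0) (hlam : 0 < lam)
    (hd0 : 0 < d0) (ht0 : 0 < t0) (hM : 0 < M) :
    ∀ ν Uc : ℝ, ν = ((n:ℝ) - (m:ℝ)) / ((q:ℝ) * ((s:ℝ) - 1)) →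
      Uc = (lam / |γ|) ^ (1 / ((s:ℝ) - 1)) →
    ∃ δ > 0, ∃ t1 ≥ t0, ∃ K > 0,
      (∀ v : ℝ → ℝ, IsAdmissible q m n s γ lam d0 t0 M v → v t1 ≤ δ →
        ∀ t ≥ t1, v t ≤ K * t ^ (-ν)) ∧
      (∃ δ' > 0, ∀ v : ℝ → ℝ, IsAdmissible q m n s γ lam d0 t0 M v →
        |t1 ^ ν * v t1 - Uc| ≤ δ' →
        Filter.Tendsto (fun t => t ^ ν * v t) Filter.atTop (nhds Uc)) :=
  polynomial_stability_m_lt_n_lt_q_general q m n s hmn hnq hs γ lam d0 t0 M hγ hlam hM
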